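/- arXiv:0812.0803 — 5 statements merged into one kernel-verified Lean document; each statement's English description precedes it below -/
import Mathlib

section
/- For every a > 0 and every K₀ > 0, there exists a unique real number λ_P > -K₀ satisfying ((λ_P + K₀)/(2K₀))·exp(λ_P·a) = 1. -/
open Real Set

theorem strictMonoOn_add_mul_exp_mul (K : ℝ) {a : ℝ} (ha : 0 ≤ a) :
    StrictMonoOn (fun x => (x + K) * exp (x * a)) (Ici (-K)) := by
  intro x _ y hy hxy
  have hexp : exp (x * a) ≤ exp (y * a) :=
    exp_le_exp.mpr (mul_le_mul_of_nonneg_right hxy.le ha)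
  exact mul_lt_mul (by linarith) hexp (exp_pos _) (by linarith [mem_Ici.mp hy])

theorem existsUnique_add_mul_exp_mul_eq (K : ℝ) {a c : ℝ} (ha : 0 ≤ a) (hc : 0 < c) :
    ∃! x, -K < x ∧ (x + K) * exp (x * a) = c := by
  set f : ℝ → ℝ := fun x => (x + K) * exp (x * a)
  -- at `b := c + |K|` both factors of `f b` are large enough: `b + K ≥ c` and `b ≥ 0`
  set b := c + |K|
  have hKb : -K ≤ b := by linarith [neg_abs_le K]
  have hfb : c ≤ f b := by
    have hb : 0 ≤ b := by positivity
    calc c ≤ (b + K) * 1 := by linarith [le_abs_self K, neg_abs_le K]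
      _ ≤ f b := mul_le_mul_of_nonneg_left (one_le_exp (mul_nonneg hb ha)) (by linarith)
  have hcont : ContinuousOn f (Icc (-K) b) := by fun_prop
  obtain ⟨x, hx, hfx⟩ := intermediate_value_Ioc hKb hcont ⟨by simpa [f] using hc, hfb⟩
  refine ⟨x, ⟨hx.1, hfx⟩, fun y hy => ?_⟩
  exact (strictMonoOn_add_mul_exp_mul K ha).injOn (mem_Ici.mpr hy.1.le) (mem_Ici.mpr hx.1.le)
    (hy.2.trans hfx.symm)

theorem stmt_0 (a K₀ : ℝ) (ha : 0 < a) (hK : 0 < K₀) :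
    ∃! lam : ℝ, lam > -K₀ ∧ (lam + K₀) / (2 * K₀) * Real.exp (lam * a) = 1 := by
  have hcharacteristic : ∀ lam : ℝ,
      (lam + K₀) / (2 * K₀) * exp (lam * a) = 1 ↔ (lam + K₀) * exp (lam * a) = 2 * K₀ := by
    intro lam
    rw [div_mul_eq_mul_div, div_eq_one_iff_eq (by positivity)]
  simpa only [gt_iff_lt, hcharacteristic] using
    existsUnique_add_mul_exp_mul_eq K₀ ha.le (by positivity : 0 < 2 * K₀)
end

section
/- Let T > 0, K₀ > 0, λ ∈ ℝ, and let ψ, P : ℝ → ℝ be continuously differentiable T-periodic functions with P > 0 and (1/T)∫₀^T ψ = 1, satisfying for all t: P'(t) + (λ + K₀ψ(t))P(t) = 2K₀ψ(t-T)P(t-T)e^{-λT}. Then ((λ+K₀)/(2K₀))·e^{λT} = 1. -/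
/-!
Dividing the delay equation by `P` and using `P(t - T) = P(t)`, `ψ(t - T) = ψ(t)` shows that
`log P` has derivative `-λ + (2K₀e^{-λT} - K₀) ψ`. Since `log P` is `T`-periodic, this derivative
integrates to zero over a period, and `∫₀^T ψ = T` turns that into `λ + K₀ = 2K₀e^{-λT}`.
-/

open Real

theorem integral_div_self_eq_zero_of_periodic {P P' : ℝ → ℝ} {T : ℝ}
    (hP : ∀ t, HasDerivAt P (P' t) t) (hP₀ : ∀ t, P t ≠ 0) (hper : Function.Periodic P T)
    (hint : IntervalIntegrable (fun t ↦ P' t / P t) MeasureTheory.volume 0 T) :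
    ∫ t in (0 : ℝ)..T, P' t / P t = 0 := by
  rw [intervalIntegral.integral_eq_sub_of_hasDerivAt (fun t _ ↦ (hP t).log (hP₀ t)) hint,
    show P T = P 0 by simpa using hper 0, sub_self]

theorem div_self_eq_of_delay_eq_period {T K₀ lam : ℝ} {ψ P P' : ℝ → ℝ}
    (hψper : Function.Periodic ψ T) (hPper : Function.Periodic P T) (hP₀ : ∀ t, P t ≠ 0)
    (hdde : ∀ t, P' t + (lam + K₀ * ψ t) * P t
      = 2 * K₀ * ψ (t - T) * P (t - T) * exp (-lam * T)) (t : ℝ) :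
    P' t / P t = -lam + (2 * K₀ * exp (-lam * T) - K₀) * ψ t := by
  have h := hdde t
  rw [hψper.sub_eq, hPper.sub_eq] at h
  rw [div_eq_iff (hP₀ t)]
  linear_combination h

theorem integral_const_add_mul_eq {ψ : ℝ → ℝ} {T : ℝ} (a c : ℝ)
    (hψ : IntervalIntegrable ψ MeasureTheory.volume 0 T) :
    ∫ t in (0 : ℝ)..T, (a + c * ψ t) = a * T + c * ∫ t in (0 : ℝ)..T, ψ t := by
  rw [intervalIntegral.integral_add intervalIntegrable_const (hψ.const_mul c),
    intervalIntegral.integral_const_mul, intervalIntegral.integral_const, smul_eq_mul, sub_zero,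
    mul_comm]

theorem div_mul_exp_eq_one_of_characteristic {T K₀ lam : ℝ} (hK : K₀ ≠ 0)
    (h : lam + K₀ = 2 * K₀ * exp (-lam * T)) :
    (lam + K₀) / (2 * K₀) * exp (lam * T) = 1 := by
  rw [h, mul_div_cancel_left₀ _ (mul_ne_zero two_ne_zero hK), ← exp_add]
  simp

theorem stmt_7_general (T K₀ lam : ℝ) (hT : 0 < T) (hK : 0 < K₀)
    (ψ P P' : ℝ → ℝ)
    (hψper : Function.Periodic ψ T)
    (hψavg : (1 / T) * ∫ t in (0 : ℝ)..T, ψ t = 1)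
    (hP : ∀ t, HasDerivAt P (P' t) t)
    (hPper : Function.Periodic P T) (hPpos : ∀ t, 0 < P t)
    (hdde : ∀ t, P' t + (lam + K₀ * ψ t) * P t
      = 2 * K₀ * ψ (t - T) * P (t - T) * Real.exp (-lam * T)) :
    (lam + K₀) / (2 * K₀) * Real.exp (lam * T) = 1 := by
  set c := 2 * K₀ * exp (-lam * T) - K₀
  have hP₀ : ∀ t, P t ≠ 0 := fun t ↦ (hPpos t).ne'
  have hψint : ∫ t in (0 : ℝ)..T, ψ t = T := by
    field_simp at hψavg
    exact hψavg
  -- a non-integrable `ψ` would have integral `0` by convention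
  have hψii : IntervalIntegrable ψ MeasureTheory.volume 0 T :=
    intervalIntegral.intervalIntegrable_of_integral_ne_zero (by rw [hψint]; exact hT.ne')
  have hlogDeriv : (fun t ↦ P' t / P t) = fun t ↦ -lam + c * ψ t :=
    funext (div_self_eq_of_delay_eq_period hψper hPper hP₀ hdde)
  have hperiod : -lam * T + c * T = 0 := by
    have h := integral_div_self_eq_zero_of_periodic hP hP₀ hPper
      (hlogDeriv ▸ intervalIntegrable_const.add (hψii.const_mul c))
    rwa [hlogDeriv, integral_const_add_mul_eq _ _ hψii, hψint] at h
  have hchar : lam + K₀ = 2 * K₀ * exp (-lam * T) := by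
    have : (c - lam) * T = 0 := by linear_combination hperiod
    linarith [(mul_eq_zero.mp this).resolve_right hT.ne']
  exact div_mul_exp_eq_one_of_characteristic hK.ne' hchar

theorem stmt_7 (T K₀ lam : ℝ) (hT : 0 < T) (hK : 0 < K₀)
    (ψ P P' : ℝ → ℝ)
    (hψ : Continuous ψ) (hψper : Function.Periodic ψ T)
    (hψavg : (1 / T) * ∫ t in (0 : ℝ)..T, ψ t = 1)
    (hP : ∀ t, HasDerivAt P (P' t) t) (hP' : Continuous P')
    (hPper : Function.Periodic P T) (hPpos : ∀ t, 0 < P t)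
    (hdde : ∀ t, P' t + (lam + K₀ * ψ t) * P t
      = 2 * K₀ * ψ (t - T) * P (t - T) * Real.exp (-lam * T)) :
    (lam + K₀) / (2 * K₀) * Real.exp (lam * T) = 1 :=
  stmt_7_general T K₀ lam hT hK ψ P P' hψper hψavg hP hPper hPpos hdde
end

section
/- Let T > 0, K₀ > 0, λ > 0, and let ψ, P : ℝ → ℝ be continuously differentiable T-periodic functions, P > 0, ⟨ψ⟩ = 1, satisfying P'(t) + (λ + K₀ψ(t))P(t) = 2K₀ψ(t-T)P(t-T)e^{-λT} for all t. Then (1/T)∫₀^T ψ(t)·P'(t)/P(t) dt = λ·(⟨ψ²⟩ - 1), where ⟨ψ²⟩ = (1/T)∫₀^T ψ(t)² dt. -/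
/-!
Since the delay equals the period, `P (t - T) = P t` and `ψ (t - T) = ψ t`, so dividing the
equation by `P` gives `P'/P = c ψ - λ` with `c = 2 K₀ e^{-λT} - K₀`. The logarithmic derivative
of a periodic positive function has zero mean, and `⟨ψ⟩ = 1`, hence `c = λ`
(i.e. `2 K₀ e^{-λT} = λ + K₀`). Then `ψ P'/P = λ (ψ² - ψ)`, whose mean is `λ (⟨ψ²⟩ - 1)`.
-/

open intervalIntegral

theorem integral_deriv_div_eq_zero_of_periodic {T : ℝ} {P P' : ℝ → ℝ}
    (hP : ∀ t, HasDerivAt P (P' t) t) (hP' : Continuous P')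
    (hPper : Function.Periodic P T) (hP0 : ∀ t, P t ≠ 0) :
    ∫ t in (0 : ℝ)..T, P' t / P t = 0 := by
  have hPcont : Continuous P :=
    continuous_iff_continuousAt.2 fun t => (hP t).continuousAt
  have hlog : ∫ t in (0 : ℝ)..T, P' t / P t = Real.log (P T) - Real.log (P 0) :=
    integral_eq_sub_of_hasDerivAt (fun t _ => (hP t).log (hP0 t))
      ((hP'.div hPcont hP0).intervalIntegrable 0 T)
  rw [hlog, show P T = P 0 by simpa using hPper 0, sub_self]

theorem deriv_div_eq_of_delay_eq_period {T K₀ lam : ℝ} {ψ P P' : ℝ → ℝ}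
    (hψper : Function.Periodic ψ T) (hPper : Function.Periodic P T) (hP0 : ∀ t, P t ≠ 0)
    (hdde : ∀ t, P' t + (lam + K₀ * ψ t) * P t
      = 2 * K₀ * ψ (t - T) * P (t - T) * Real.exp (-lam * T)) (t : ℝ) :
    P' t / P t = (2 * K₀ * Real.exp (-lam * T) - K₀) * ψ t - lam := by
  have h := hdde t
  rw [hψper.sub_eq, hPper.sub_eq] at h
  rw [div_eq_iff (hP0 t)]
  linear_combination h

theorem eq_of_deriv_div_eq_mul_sub {T c lam : ℝ} {ψ P P' : ℝ → ℝ} (hT : T ≠ 0)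
    (hψ : Continuous ψ) (hψint : ∫ t in (0 : ℝ)..T, ψ t = T)
    (hP : ∀ t, HasDerivAt P (P' t) t) (hP' : Continuous P')
    (hPper : Function.Periodic P T) (hP0 : ∀ t, P t ≠ 0)
    (hlogDeriv : ∀ t, P' t / P t = c * ψ t - lam) :
    c = lam := by
  have hmean : ∫ t in (0 : ℝ)..T, (c * ψ t - lam) = (c - lam) * T := by
    rw [integral_sub ((hψ.const_mul c).intervalIntegrable 0 T) intervalIntegrable_const,
      integral_const_mul, hψint, integral_const, smul_eq_mul]
    ring
  have hzero := integral_deriv_div_eq_zero_of_periodic hP hP' hPper hP0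
  simp only [hlogDeriv, hmean, mul_eq_zero, hT, or_false] at hzero
  linarith

theorem stmt_9_general (T K₀ lam : ℝ) (hT : 0 < T)
    (ψ P P' : ℝ → ℝ)
    (hψ : Continuous ψ) (hψper : Function.Periodic ψ T)
    (hψavg : (1 / T) * ∫ t in (0 : ℝ)..T, ψ t = 1)
    (hP : ∀ t, HasDerivAt P (P' t) t) (hP' : Continuous P')
    (hPper : Function.Periodic P T) (hPpos : ∀ t, 0 < P t)
    (hdde : ∀ t, P' t + (lam + K₀ * ψ t) * P t
      = 2 * K₀ * ψ (t - T) * P (t - T) * Real.exp (-lam * T)) :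
    (1 / T) * ∫ t in (0 : ℝ)..T, ψ t * P' t / P t
      = lam * ((1 / T) * (∫ t in (0 : ℝ)..T, (ψ t) ^ 2) - 1) := by
  have hP0 : ∀ t, P t ≠ 0 := fun t => (hPpos t).ne'
  have hψint : ∫ t in (0 : ℝ)..T, ψ t = T := by
    field_simp at hψavg
    exact hψavg
  have hlogDeriv := deriv_div_eq_of_delay_eq_period hψper hPper hP0 hdde
  have hc := eq_of_deriv_div_eq_mul_sub hT.ne' hψ hψint hP hP' hPper hP0 hlogDeriv
  have hintegrand : ∀ t, ψ t * P' t / P t = lam * ψ t ^ 2 - lam * ψ t := fun t => by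
    rw [mul_div_assoc, hlogDeriv, hc]
    ring
  simp only [hintegrand]
  rw [integral_sub ((by fun_prop : Continuous fun t => lam * ψ t ^ 2).intervalIntegrable 0 T)
      ((hψ.const_mul lam).intervalIntegrable 0 T),
    integral_const_mul, integral_const_mul, hψint]
  field_simp

theorem stmt_9 (T K₀ lam : ℝ) (hT : 0 < T) (hK : 0 < K₀) (hlam : 0 < lam)
    (ψ P P' : ℝ → ℝ)
    (hψ : Continuous ψ) (hψper : Function.Periodic ψ T)
    (hψavg : (1 / T) * ∫ t in (0 : ℝ)..T, ψ t = 1)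
    (hP : ∀ t, HasDerivAt P (P' t) t) (hP' : Continuous P')
    (hPper : Function.Periodic P T) (hPpos : ∀ t, 0 < P t)
    (hdde : ∀ t, P' t + (lam + K₀ * ψ t) * P t
      = 2 * K₀ * ψ (t - T) * P (t - T) * Real.exp (-lam * T)) :
    (1 / T) * ∫ t in (0 : ℝ)..T, ψ t * P' t / P t
      = lam * ((1 / T) * (∫ t in (0 : ℝ)..T, (ψ t) ^ 2) - 1) :=
  stmt_9_general T K₀ lam hT ψ P P' hψ hψper hψavg hP hP' hPper hPpos hdde
end

section
/- Let n ≥ 2 and let W be the n×n Wielandt matrix, with first row (0,...,0,1,1) and rows 2..n equal to the rows of the identity matrix of size n-1 followed by a zero column (i.e., W(1,n-1) = W(1,n) = 1, W(i+1,i) = 1 for 1 ≤ i ≤ n-1, all other entries 0). Then W is primitive: there exists p ∈ ℕ such that every entry of W^p is strictly positive. -/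
/-!
In the digraph of positive entries, the index `0` carries closed walks of the coprime lengths
`n - 1` (through `n - 2`) and `n` (through `n - 1`), so every length from `(n - 2) (n - 1)` on is
the length of a closed walk at `0`. Every index descends to `0` in fewer than `n` steps and is
reached from `0` in at most `n` steps; padding with closed walks at `0` gives a walk of length
exactly `(n - 2) (n - 1) + 2 n` between any two indices, i.e. a positive entry of that power.
-/

lemma Nat.mem_addSubmonoidClosure_pair_succ {a m : ℕ} (ha : 1 ≤ a) (hm : (a - 1) * a ≤ m) :
    m ∈ AddSubmonoid.closure ({a, a + 1} : Set ℕ) := by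
  rw [AddSubmonoid.mem_closure_pair]
  have hdiv := Nat.div_add_mod m a
  have hle : m % a ≤ m / a := by
    have : a - 1 ≤ m / a := (Nat.le_div_iff_mul_le ha).2 hm
    have : m % a < a := Nat.mod_lt _ ha
    omega
  -- `m = a q + r` with `r < a ≤ q + 1` is `(q - r) a + r (a + 1)`
  refine ⟨m / a - m % a, m % a, ?_⟩
  simp only [smul_eq_mul]
  zify [hle] at hdiv ⊢
  linear_combination hdiv

namespace Matrix

variable {ι α : Type*} [Fintype ι] [DecidableEq ι] [Semiring α] [PartialOrder α]
  [IsStrictOrderedRing α] {A : Matrix ι ι α}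

lemma pow_add_apply_pos (hA : ∀ i j, 0 ≤ A i j) {a b : ℕ} {i k j : ι}
    (h₁ : 0 < (A ^ a) i k) (h₂ : 0 < (A ^ b) k j) : 0 < (A ^ (a + b)) i j := by
  rw [pow_add, mul_apply]
  exact Finset.sum_pos'
    (fun l _ ↦ mul_nonneg (pow_apply_nonneg hA a i l) (pow_apply_nonneg hA b l j))
    ⟨k, Finset.mem_univ k, mul_pos h₁ h₂⟩

lemma pow_apply_self_pos_of_mem_closure (hA : ∀ i j, 0 ≤ A i j) {s : Set ℕ} {i : ι}
    (hs : ∀ k ∈ s, 0 < (A ^ k) i i) {m : ℕ} (hm : m ∈ AddSubmonoid.closure s) :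
    0 < (A ^ m) i i := by
  induction hm using AddSubmonoid.closure_induction with
  | mem k hk => exact hs k hk
  | zero => simp
  | add k l _ _ hk hl => exact pow_add_apply_pos hA hk hl

lemma pow_apply_pos_of_cycles_succ (hA : ∀ i j, 0 ≤ A i j) {c : ι} {a N : ℕ} (ha : 1 ≤ a)
    (hcyc : 0 < (A ^ a) c c) (hcyc' : 0 < (A ^ (a + 1)) c c)
    (hto : ∀ i, ∃ k ≤ N, 0 < (A ^ k) i c) (hfrom : ∀ j, ∃ k ≤ N, 0 < (A ^ k) c j)
    (i j : ι) :
    0 < (A ^ ((a - 1) * a + 2 * N)) i j := by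
  obtain ⟨k₁, hk₁, h₁⟩ := hto i
  obtain ⟨k₂, hk₂, h₂⟩ := hfrom j
  set m := (a - 1) * a + 2 * N - k₁ - k₂
  have hloop : 0 < (A ^ m) c c := by
    refine pow_apply_self_pos_of_mem_closure hA ?_
      (Nat.mem_addSubmonoidClosure_pair_succ ha (by omega))
    rintro k (rfl | rfl)
    exacts [hcyc, hcyc']
  have hlen : k₁ + m + k₂ = (a - 1) * a + 2 * N := by omega
  rw [← hlen]
  exact pow_add_apply_pos hA (pow_add_apply_pos hA h₁ hloop) h₂

variable (α) in
def wielandt (n : ℕ) : Matrix (Fin n) (Fin n) α :=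
  of fun i j ↦ if (i.val = 0 ∧ (j.val = n - 2 ∨ j.val = n - 1)) ∨ i.val = j.val + 1 then 1 else 0

variable {n : ℕ}

lemma wielandt_apply_pos {i j : Fin n}
    (h : (i.val = 0 ∧ (j.val = n - 2 ∨ j.val = n - 1)) ∨ i.val = j.val + 1) :
    0 < wielandt α n i j := by
  simp [wielandt, h]

lemma wielandt_nonneg (i j : Fin n) : 0 ≤ wielandt α n i j := by
  simp only [wielandt, of_apply]
  split_ifs <;> simp

lemma wielandt_pow_apply_pos_of_eq_add {d : ℕ} {i j : Fin n} (h : i.val = j.val + d) :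
    0 < (wielandt α n ^ d) i j := by
  induction d generalizing j with
  | zero =>
    obtain rfl : i = j := Fin.ext h
    simp
  | succ d ih =>
    have hlt : j.val + 1 < n := by omega
    exact pow_add_apply_pos wielandt_nonneg (ih (j := ⟨j.val + 1, hlt⟩) (by simp only; omega))
      (by simpa using wielandt_apply_pos (Or.inr rfl))

lemma wielandt_pow_apply_pos_of_zero {d : ℕ} {i j : Fin n} (hi : i.val = 0)
    (hj : j.val + d = n - 2 ∨ j.val + d = n - 1) : 0 < (wielandt α n ^ (1 + d)) i j := by
  have hlt : j.val + d < n := by omega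
  exact pow_add_apply_pos wielandt_nonneg (k := ⟨j.val + d, hlt⟩)
    (by simpa using wielandt_apply_pos (Or.inl ⟨hi, hj⟩)) (wielandt_pow_apply_pos_of_eq_add rfl)

end Matrix

open Matrix in
theorem stmt_13 (n : ℕ) (hn : 2 ≤ n)
    (W : Matrix (Fin n) (Fin n) ℝ)
    (hW : ∀ i j : Fin n, W i j =
      if (i.val = 0 ∧ (j.val = n - 2 ∨ j.val = n - 1)) ∨ i.val = j.val + 1 then 1 else 0) :
    ∃ p : ℕ, ∀ i j : Fin n, 0 < (W ^ p) i j := by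
  obtain rfl : W = wielandt ℝ n := ext hW
  let c : Fin n := ⟨0, by omega⟩
  have hcyc : 0 < (wielandt ℝ n ^ (n - 1)) c c := by
    simpa [show 1 + (n - 2) = n - 1 by omega] using
      wielandt_pow_apply_pos_of_zero (d := n - 2) (i := c) (j := c) rfl (by simp [c])
  have hcyc' : 0 < (wielandt ℝ n ^ (n - 1 + 1)) c c := by
    simpa [show 1 + (n - 1) = n - 1 + 1 by omega] using
      wielandt_pow_apply_pos_of_zero (d := n - 1) (i := c) (j := c) rfl (by simp [c])
  have hto (i : Fin n) : ∃ k ≤ n, 0 < (wielandt ℝ n ^ k) i c :=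
    ⟨i.val, i.is_lt.le, wielandt_pow_apply_pos_of_eq_add (by simp [c])⟩
  have hfrom (j : Fin n) : ∃ k ≤ n, 0 < (wielandt ℝ n ^ k) c j :=
    ⟨1 + (n - 1 - j.val), by omega, wielandt_pow_apply_pos_of_zero rfl (Or.inr (by omega))⟩
  exact ⟨_, pow_apply_pos_of_cycles_succ wielandt_nonneg (by omega) hcyc hcyc' hto hfrom⟩
end

section
/- Let 𝕄 be a nonnegative primitive n×n matrix with spectral radius ρ. If v and w are vectors with strictly positive entries and μ, ν > 0 satisfy 𝕄v = μv and 𝕄w = νw, then μ = ν = ρ and w is a positive scalar multiple of v. -/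
/-!
If a nonnegative matrix `M` has a positive eigenvector `v` with eigenvalue `μ`, then `r ≤ μ`
whenever `r • x ≤ M *ᵥ x` for a nonnegative `x ≠ 0`: at a coordinate where `x i / v i` is
maximal, `x` touches the smallest multiple of `v` dominating it, and monotonicity of `M` gives
`r ≤ μ`.
For a complex eigenvector `z` with eigenvalue `λ`, the triangle inequality gives
`‖λ‖ • |z| ≤ M *ᵥ |z|`, so `μ` is the spectral radius; in particular any two positive
eigenvectors share the eigenvalue `ρ`. If `c` is the largest scalar with `c • v ≤ w`, then
`w - c • v` is a nonnegative eigenvector vanishing at some coordinate; as `M ^ p` has positive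
entries, this forces `w - c • v = 0`.
-/

namespace Matrix

variable {ι : Type*} [Fintype ι]

theorem mem_spectrum_iff_exists_mulVec_eq_smul [DecidableEq ι] {K : Type*} [Field K]
    {A : Matrix ι ι K} {μ : K} : μ ∈ spectrum K A ↔ ∃ z ≠ 0, A *ᵥ z = μ • z := by
  rw [← spectrum_toLin', ← Module.End.hasEigenvalue_iff_mem_spectrum,
    Module.End.hasEigenvalue_iff, Submodule.ne_bot_iff]
  simp only [Module.End.mem_eigenspace_iff, toLin'_apply]
  tauto

variable {M : Matrix ι ι ℝ}

theorem mulVec_mono_of_nonneg (hM : ∀ i j, 0 ≤ M i j) {x y : ι → ℝ} (hxy : x ≤ y) :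
    M *ᵥ x ≤ M *ᵥ y :=
  fun i => dotProduct_le_dotProduct_of_nonneg_left hxy (hM i)

theorem le_of_smul_le_mulVec (hM : ∀ i j, 0 ≤ M i j) {v : ι → ℝ} (hv : ∀ i, 0 < v i) {μ : ℝ}
    (hMv : M *ᵥ v = μ • v) {x : ι → ℝ} (hx : 0 ≤ x) (hx0 : x ≠ 0) {r : ℝ}
    (hr : r • x ≤ M *ᵥ x) : r ≤ μ := by
  obtain ⟨j, hj⟩ := Function.ne_iff.mp hx0
  obtain ⟨i₀, -, hi₀⟩ := Finset.exists_max_image Finset.univ (fun i => x i / v i)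
    ⟨j, Finset.mem_univ j⟩
  set c := x i₀ / v i₀
  have hx_le : x ≤ c • v := fun i => (div_le_iff₀ (hv i)).mp (hi₀ i (Finset.mem_univ i))
  have hx_i₀ : x i₀ = c * v i₀ := (div_mul_cancel₀ _ (hv i₀).ne').symm
  have hc : 0 < c := (div_pos ((hx j).lt_of_ne' hj) (hv j)).trans_le (hi₀ j (Finset.mem_univ j))
  have key : r * x i₀ ≤ μ * x i₀ :=
    calc r * x i₀ ≤ (M *ᵥ x) i₀ := hr i₀
      _ ≤ (M *ᵥ (c • v)) i₀ := mulVec_mono_of_nonneg hM hx_le i₀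
      _ = μ * x i₀ := by
        rw [mulVec_smul, hMv, hx_i₀]
        simp only [Pi.smul_apply, smul_eq_mul]
        ring
  exact le_of_mul_le_mul_right key (hx_i₀ ▸ mul_pos hc (hv i₀))

variable [DecidableEq ι]

theorem norm_le_of_mem_spectrum_map_ofReal (hM : ∀ i j, 0 ≤ M i j) {v : ι → ℝ}
    (hv : ∀ i, 0 < v i) {μ : ℝ} (hMv : M *ᵥ v = μ • v) {lam : ℂ}
    (hlam : lam ∈ spectrum ℂ (M.map (Complex.ofReal ·))) : ‖lam‖ ≤ μ := by
  obtain ⟨z, hz0, hz⟩ := mem_spectrum_iff_exists_mulVec_eq_smul.mp hlam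
  refine le_of_smul_le_mulVec hM hv hMv (x := fun i => ‖z i‖) (fun i => norm_nonneg _)
    (fun h => hz0 (funext fun i => norm_eq_zero.mp (congrFun h i))) fun i => ?_
  calc ‖lam‖ * ‖z i‖ = ‖∑ k, (M i k : ℂ) * z k‖ := by
        rw [← norm_mul, ← smul_eq_mul, ← Pi.smul_apply, ← hz]
        simp only [mulVec, dotProduct, map_apply]
    _ ≤ ∑ k, ‖(M i k : ℂ) * z k‖ := norm_sum_le _ _
    _ = (M *ᵥ fun i => ‖z i‖) i := by
        simp only [norm_mul, Complex.norm_real, Real.norm_of_nonneg (hM i _), mulVec, dotProduct]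

theorem ofReal_mem_spectrum_map_ofReal {v : ι → ℝ} (hv : v ≠ 0) {μ : ℝ}
    (hMv : M *ᵥ v = μ • v) : (μ : ℂ) ∈ spectrum ℂ (M.map (Complex.ofReal ·)) := by
  refine mem_spectrum_iff_exists_mulVec_eq_smul.mpr ⟨fun i => v i, ?_, funext fun i => ?_⟩
  · exact fun h => hv (funext fun i => Complex.ofReal_injective (congrFun h i))
  · calc _ = Complex.ofRealHom ((M *ᵥ v) i) := (Complex.ofRealHom.map_mulVec M v i).symm
      _ = _ := by simp [hMv]

theorem isGreatest_norm_spectrum_map_ofReal [Nonempty ι] (hM : ∀ i j, 0 ≤ M i j)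
    {v : ι → ℝ} (hv : ∀ i, 0 < v i) {μ : ℝ} (hMv : M *ᵥ v = μ • v) :
    IsGreatest {r : ℝ | ∃ lam : ℂ, lam ∈ spectrum ℂ (M.map (Complex.ofReal ·)) ∧ ‖lam‖ = r} μ := by
  have hμ_mem := ofReal_mem_spectrum_map_ofReal (Function.ne_iff.mpr ⟨Classical.arbitrary ι,
    (hv _).ne'⟩) hMv
  have hμ_norm : ‖(μ : ℂ)‖ ≤ μ := norm_le_of_mem_spectrum_map_ofReal hM hv hMv hμ_mem
  refine ⟨⟨μ, hμ_mem, ?_⟩, ?_⟩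
  · rw [Complex.norm_real] at hμ_norm ⊢
    exact le_antisymm hμ_norm (Real.le_norm_self μ)
  · rintro _ ⟨lam, hlam, rfl⟩
    exact norm_le_of_mem_spectrum_map_ofReal hM hv hMv hlam

theorem eq_zero_of_mulVec_eq_smul_of_pow_pos {p : ℕ} (hp : ∀ i j, 0 < (M ^ p) i j)
    {u : ι → ℝ} (hu : 0 ≤ u) {μ : ℝ} (hMu : M *ᵥ u = μ • u) {i₀ : ι} (hi₀ : u i₀ = 0) :
    u = 0 := by
  have hpow : ∀ k : ℕ, (M ^ k) *ᵥ u = μ ^ k • u := by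
    intro k
    induction k with
    | zero => simp
    | succ k ih => rw [pow_succ', ← mulVec_mulVec, ih, mulVec_smul, hMu, smul_smul, pow_succ]
  have hsum : ∑ k, (M ^ p) i₀ k * u k = 0 := by
    simpa [mulVec, dotProduct, hi₀] using congrFun (hpow p) i₀
  rw [Finset.sum_eq_zero_iff_of_nonneg fun k _ => mul_nonneg (hp i₀ k).le (hu k)] at hsum
  exact funext fun k => (mul_eq_zero.mp (hsum k (Finset.mem_univ k))).resolve_left (hp i₀ k).ne'

theorem exists_pos_smul_eq_of_pow_pos [Nonempty ι] {p : ℕ} (hp : ∀ i j, 0 < (M ^ p) i j)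
    {v w : ι → ℝ} (hv : ∀ i, 0 < v i) (hw : ∀ i, 0 < w i) {μ : ℝ}
    (hMv : M *ᵥ v = μ • v) (hMw : M *ᵥ w = μ • w) : ∃ c : ℝ, 0 < c ∧ w = c • v := by
  obtain ⟨i₀, -, hi₀⟩ := Finset.exists_min_image Finset.univ (fun i => w i / v i)
    Finset.univ_nonempty
  set c := w i₀ / v i₀
  refine ⟨c, div_pos (hw i₀) (hv i₀), (sub_eq_zero.mp ?_)⟩
  refine eq_zero_of_mulVec_eq_smul_of_pow_pos hp (μ := μ) (i₀ := i₀) (fun i => ?_) ?_ ?_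
  · simpa [sub_nonneg] using (le_div_iff₀ (hv i)).mp (hi₀ i (Finset.mem_univ i))
  · rw [mulVec_sub, mulVec_smul, hMv, hMw, smul_sub, smul_comm]
  · simp [c, div_mul_cancel₀ _ (hv i₀).ne']

end Matrix

theorem stmt_16_general (n : ℕ) (𝕄 : Matrix (Fin n) (Fin n) ℝ)
    (hnn : ∀ i j, 0 ≤ 𝕄 i j)
    (hprim : ∃ p : ℕ, 1 ≤ p ∧ ∀ i j, 0 < (𝕄 ^ p) i j)
    (ρ : ℝ)
    (hρ : IsGreatest {r : ℝ | ∃ μ : ℂ, μ ∈ spectrum ℂ (𝕄.map (Complex.ofReal ·)) ∧ ‖μ‖ = r} ρ)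
    (v w : Fin n → ℝ) (hv : ∀ i, 0 < v i) (hw : ∀ i, 0 < w i)
    (μ ν : ℝ)
    (hMv : 𝕄.mulVec v = μ • v) (hMw : 𝕄.mulVec w = ν • w) :
    μ = ρ ∧ ν = ρ ∧ ∃ c : ℝ, 0 < c ∧ w = c • v := by
  have : Nonempty (Fin n) := by
    obtain ⟨lam, hlam, -⟩ := hρ.1
    obtain ⟨z, hz, -⟩ := Matrix.mem_spectrum_iff_exists_mulVec_eq_smul.mp hlam
    exact ⟨(Function.ne_iff.mp hz).choose⟩
  have hμ : μ = ρ := (Matrix.isGreatest_norm_spectrum_map_ofReal hnn hv hMv).unique hρ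
  have hν : ν = ρ := (Matrix.isGreatest_norm_spectrum_map_ofReal hnn hw hMw).unique hρ
  obtain ⟨p, -, hp⟩ := hprim
  exact ⟨hμ, hν, Matrix.exists_pos_smul_eq_of_pow_pos hp hv hw hMv (by rwa [hν, ← hμ] at hMw)⟩

theorem stmt_16 (n : ℕ) (𝕄 : Matrix (Fin n) (Fin n) ℝ)
    (hnn : ∀ i j, 0 ≤ 𝕄 i j)
    (hprim : ∃ p : ℕ, 1 ≤ p ∧ ∀ i j, 0 < (𝕄 ^ p) i j)
    (ρ : ℝ)
    (hρ : IsGreatest {r : ℝ | ∃ μ : ℂ, μ ∈ spectrum ℂ (𝕄.map (Complex.ofReal ·)) ∧ ‖μ‖ = r} ρ)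
    (v w : Fin n → ℝ) (hv : ∀ i, 0 < v i) (hw : ∀ i, 0 < w i)
    (μ ν : ℝ) (hμ : 0 < μ) (hν : 0 < ν)
    (hMv : 𝕄.mulVec v = μ • v) (hMw : 𝕄.mulVec w = ν • w) :
    μ = ρ ∧ ν = ρ ∧ ∃ c : ℝ, 0 < c ∧ w = c • v :=
  stmt_16_general n 𝕄 hnn hprim ρ hρ v w hv hw μ ν hMv hMw
end
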